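/- Spectrum of the ironed-gadget second-moment matrix: for all real numbers a and c, the characteristic polynomial of the 4×4 real matrix M(a,c) equals (X − 1)² · (X − (5a−3)/2) · (X − (3a−4c−1)/2); equivalently, the eigenvalues of M(a,c) (with multiplicity) are 1, 1, (5a−3)/2, and (3a−4c−1)/2. -/
import Mathlib


open Matrix Polynomial

/-- The matrix representation `M(a,c)` of the second moment operator of an ironed gadget
(Eq. (eq:Gadget4x4) of the paper, with `b = (1-a)/2`). -/
noncomputable def gadgetMatrix (a c : ℝ) : Matrix (Fin 4) (Fin 4) ℝ :=
  !![1, 0, 0, 0;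
     0, 1 - c - (3/2) * (1 - a), c, (Real.sqrt 3 / 2) * (1 - a);
     0, c, 1 - c - (3/2) * (1 - a), (Real.sqrt 3 / 2) * (1 - a);
     0, (Real.sqrt 3 / 2) * (1 - a), (Real.sqrt 3 / 2) * (1 - a), a]

/-- Cofactor expansion of a 4×4 determinant. -/
lemma det_fin_four' {R : Type*} [CommRing R] (M : Matrix (Fin 4) (Fin 4) R) :
    M.det =
      M 0 0 * (M 1 1 * (M 2 2 * M 3 3 - M 2 3 * M 3 2) - M 1 2 * (M 2 1 * M 3 3 - M 2 3 * M 3 1) + M 1 3 * (M 2 1 * M 3 2 - M 2 2 * M 3 1))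
    - M 0 1 * (M 1 0 * (M 2 2 * M 3 3 - M 2 3 * M 3 2) - M 1 2 * (M 2 0 * M 3 3 - M 2 3 * M 3 0) + M 1 3 * (M 2 0 * M 3 2 - M 2 2 * M 3 0))
    + M 0 2 * (M 1 0 * (M 2 1 * M 3 3 - M 2 3 * M 3 1) - M 1 1 * (M 2 0 * M 3 3 - M 2 3 * M 3 0) + M 1 3 * (M 2 0 * M 3 1 - M 2 1 * M 3 0))
    - M 0 3 * (M 1 0 * (M 2 1 * M 3 2 - M 2 2 * M 3 1) - M 1 1 * (M 2 0 * M 3 2 - M 2 2 * M 3 0) + M 1 2 * (M 2 0 * M 3 1 - M 2 1 * M 3 0)) := by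
  have e1 : (Fin.succ 2 : Fin 4) = 3 := rfl
  have e2 : (Fin.succAbove 2 2 : Fin 4) = 3 := rfl
  have e3 : (Fin.castSucc 2 : Fin 4) = 2 := rfl
  have e4 : (Fin.succAbove 1 2 : Fin 4) = 3 := rfl
  have e5 : (Fin.succAbove 3 2 : Fin 4) = 2 := rfl
  simp [Matrix.det_succ_row_zero, Fin.sum_univ_succ, Matrix.submatrix_apply, e1, e2, e3, e4, e5]
  ring

/-- The characteristic matrix of `gadgetMatrix a c`, written out explicitly. -/
lemma charmat_gadget (a c : ℝ) :
    (gadgetMatrix a c).charmatrix =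
      !![X - 1, 0, 0, 0;
         0, X - C (1 - c - (3/2) * (1 - a)), -C c, -C ((Real.sqrt 3 / 2) * (1 - a));
         0, -C c, X - C (1 - c - (3/2) * (1 - a)), -C ((Real.sqrt 3 / 2) * (1 - a));
         0, -C ((Real.sqrt 3 / 2) * (1 - a)), -C ((Real.sqrt 3 / 2) * (1 - a)), X - C a] := by
  ext i j
  fin_cases i <;> fin_cases j <;>
    simp [charmatrix_apply, gadgetMatrix, Matrix.one_apply, Matrix.vecHead, Matrix.vecTail]

/-- **Spectrum of the ironed-gadget second-moment matrix**: the characteristic polynomial of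
`M(a,c)` is `(X − 1)² (X − (5a−3)/2) (X − (3a−4c−1)/2)`; equivalently its eigenvalues
(with multiplicity) are `1, 1, (5a−3)/2, (3a−4c−1)/2`. -/
theorem gadgetMatrix_charpoly (a c : ℝ) :
    (gadgetMatrix a c).charpoly =
      (X - 1) ^ 2 * (X - C ((5 * a - 3) / 2)) * (X - C ((3 * a - 4 * c - 1) / 2)) := by
  have h3 : Real.sqrt 3 ^ 2 = 3 := Real.sq_sqrt (by norm_num)
  rw [Matrix.charpoly, charmat_gadget, det_fin_four']
  simp only [Matrix.cons_val', Matrix.cons_val_zero, Matrix.cons_val_one, Matrix.cons_val_two,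
    Matrix.cons_val_three, Matrix.head_cons, Matrix.tail_cons, Matrix.head_fin_const,
    Matrix.empty_val', Matrix.cons_val_fin_one, Matrix.of_apply, Matrix.cons_val_succ]
  apply Polynomial.funext
  intro x
  simp only [eval_mul, eval_add, eval_sub, eval_neg, eval_pow, eval_X, eval_C, eval_one,
    eval_zero]
  ring_nf
  simp only [h3]
  ring
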